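/- arXiv:1502.00650 — 6 statements merged into one kernel-verified Lean document; each statement's English description precedes it below -/
import Mathlib

section
/- Let Δ' → Δ be a surjection of finite groups, let A, B be finite Δ-modules in duality (inflated to Δ'-modules). For a ∈ Ĉ^{-i-1}(Δ', A) and b ∈ Ĉ^{i}(Δ, B) one has a ∪ inf(b) = inf(coinf(a) ∪ b) in Ĉ^{-1}(Δ', ℚ/ℤ) = ℚ/ℤ, where inf denotes inflation of cochains along Δ' → Δ and coinf denotes the coinflation map on negative-degree Tate cochains given by summing over fibers. -/
open Function Finset

/-- `ℚ/ℤ`, the value group of local Tate duality, identified with `Ĉ⁻¹(Δ, ℚ/ℤ)`. -/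
abbrev QZ := AddCircle (1 : ℚ)

/-- Coinflation of a degree `-(i+1)` Tate cochain along a surjection of finite groups:
`(coinf a)(σ₁,…,σᵢ) = Σ_{π(σ'ⱼ)=σⱼ} a(σ'₁,…,σ'ᵢ)`. -/
def coinf {Δ' Δ : Type} [Fintype Δ'] [DecidableEq Δ] {A : Type} [AddCommGroup A]
    (π : Δ' → Δ) {i : ℕ} (a : (Fin i → Δ') → A) : (Fin i → Δ) → A :=
  fun σ => ∑ σ' ∈ Finset.univ.filter (fun x : Fin i → Δ' => π ∘ x = σ), a σ'

/-- For a surjection `Δ' → Δ` of finite groups and finite `Δ`-modules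
`A`, `B` in duality, `a ∈ Ĉ^{-i-1}(Δ', A)` and `b ∈ Ĉ^{i}(Δ, B)`, one has
`a ∪ inf(b) = inf(coinf(a) ∪ b)` in `Ĉ^{-1}(Δ', ℚ/ℤ) = ℚ/ℤ` (inflation in degree `-1`
being the identity of `ℚ/ℤ`). -/
theorem cup_inflation_coinflation
    {Δ' Δ : Type} [Group Δ'] [Group Δ] [Fintype Δ'] [Fintype Δ] [DecidableEq Δ]
    (π : Δ' →* Δ) (hπ : Function.Surjective π)
    {A B : Type} [AddCommGroup A] [AddCommGroup B] [Finite A] [Finite B]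
    [DistribMulAction Δ A] [DistribMulAction Δ B]
    (pair : A →+ B →+ QZ)
    (hequiv : ∀ (σ : Δ) (x : A) (y : B), pair (σ • x) (σ • y) = pair x y)
    (hnondegA : ∀ x : A, (∀ y : B, pair x y = 0) → x = 0)
    (hnondegB : ∀ y : B, (∀ x : A, pair x y = 0) → y = 0)
    (i : ℕ) (a : (Fin i → Δ') → A) (b : (Fin i → Δ) → B) :
    ∑ σ' : Fin i → Δ', pair (a σ') (b (π ∘ σ')) =
      ∑ σ : Fin i → Δ, pair (coinf π a σ) (b σ) := by
  rw [eq_comm]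
  simp only [coinf, map_sum, AddMonoidHom.coe_mk, AddMonoidHom.finset_sum_apply]
  rw [← Finset.sum_fiberwise_of_maps_to (g := fun σ' => π ∘ σ')
    (fun x _ => Finset.mem_univ _) (fun σ' => pair (a σ') (b (π ∘ σ')))]
  refine Finset.sum_congr rfl fun σ _ => ?_
  refine Finset.sum_congr rfl fun σ' hσ' => ?_
  simp only [Finset.mem_filter] at hσ'
  rw [hσ'.2]
end

section
/- Let F be a p-adic field with absolute Galois group Γ, let G ⊂ G_z be an inclusion of connected reductive F-groups such that G contains the derived group of G_z, the quotient C = G_z/G is a torus with H^1(Γ, C) = 1, and the natural map H^1(Γ, Z(G)) → H^1(Γ, Z(G_z)) is bijective (a pseudo-z-embedding). Then: (a) the map Z(G_z)(F) → C(F) is surjective, and (b) G_z(F) = Z(G_z)(F) · G(F). -/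
/-- A model, at the level of `F̄`-points with Galois action, of a pseudo-z-embedding
`G → G_z` of connected reductive groups over a `p`-adic field: `G` contains the derived
group of `G_z`, the quotient `C = G_z/G` is a torus with `H¹(Γ, C) = 1`, and the natural
map `H¹(Γ, Z(G)) → H¹(Γ, Z(G_z))` is bijective. -/
structure PseudoZEmb (Γ : Type) [Group Γ] (G Gz : Type) [Group G] [Group Gz]
    [MulDistribMulAction Γ G] [MulDistribMulAction Γ Gz] : Type 1 where
  /-- the cokernel torus `C = G_z/G` -/
  C : Type
  [commC : CommGroup C]
  [actC : MulDistribMulAction Γ C]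
  ι : G →* Gz
  π : Gz →* C
  ι_inj : Function.Injective ι
  π_surj : Function.Surjective π
  ker_eq : ∀ x : Gz, π x = 1 ↔ ∃ g : G, ι g = x
  ι_equiv : ∀ (σ : Γ) (g : G), ι (σ • g) = σ • ι g
  π_equiv : ∀ (σ : Γ) (x : Gz), π (σ • x) = σ • π x
  /-- `H¹(Γ, C) = 1` -/
  h1C : ∀ c : Γ → C, (∀ σ τ : Γ, c (σ * τ) = c σ * σ • c τ) →
    ∃ x : C, ∀ σ : Γ, c σ = x⁻¹ * σ • x
  /-- `Z(G)` maps into `Z(G_z)` -/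
  center_map : ∀ g : G, g ∈ Subgroup.center G → ι g ∈ Subgroup.center Gz
  /-- injectivity of `H¹(Γ, Z(G)) → H¹(Γ, Z(G_z))` -/
  h1Z_inj : ∀ c c' : Γ → G,
    (∀ σ : Γ, c σ ∈ Subgroup.center G) → (∀ σ : Γ, c' σ ∈ Subgroup.center G) →
    (∀ σ τ : Γ, c (σ * τ) = c σ * σ • c τ) →
    (∀ σ τ : Γ, c' (σ * τ) = c' σ * σ • c' τ) →
    (∃ x ∈ Subgroup.center Gz, ∀ σ : Γ, ι (c' σ) = ι (c σ) * (x⁻¹ * σ • x)) →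
    ∃ z ∈ Subgroup.center G, ∀ σ : Γ, c' σ = c σ * (z⁻¹ * σ • z)
  /-- surjectivity of `H¹(Γ, Z(G)) → H¹(Γ, Z(G_z))` -/
  h1Z_surj : ∀ d : Γ → Gz, (∀ σ : Γ, d σ ∈ Subgroup.center Gz) →
    (∀ σ τ : Γ, d (σ * τ) = d σ * σ • d τ) →
    ∃ c : Γ → G, (∀ σ : Γ, c σ ∈ Subgroup.center G) ∧
      (∀ σ τ : Γ, c (σ * τ) = c σ * σ • c τ) ∧
      ∃ x ∈ Subgroup.center Gz, ∀ σ : Γ, d σ = ι (c σ) * (x⁻¹ * σ • x)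

attribute [instance] PseudoZEmb.commC PseudoZEmb.actC

/-- For a pseudo-z-embedding `G → G_z` over a `p`-adic field `F`:
(a) the map `Z(G_z)(F) → C(F)` is surjective, and (b) `G_z(F) = Z(G_z)(F) · G(F)`.
(`F`-points are modeled as `Γ`-fixed points; the surjectivity of `Z(G_z) → C` on
`F̄`-points is the geometric input `hZbar`.) -/
theorem pseudoZEmb_points
    {Γ G Gz : Type} [Group Γ] [Group G] [Group Gz]
    [MulDistribMulAction Γ G] [MulDistribMulAction Γ Gz]
    (P : PseudoZEmb Γ G Gz)
    (hZbar : ∀ x : P.C, ∃ g ∈ Subgroup.center Gz, P.π g = x) :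
    -- (a) `Z(G_z)(F) → C(F)` is surjective
    (∀ x : P.C, (∀ σ : Γ, σ • x = x) →
      ∃ g ∈ Subgroup.center Gz, (∀ σ : Γ, σ • g = g) ∧ P.π g = x) ∧
    -- (b) `G_z(F) = Z(G_z)(F) · G(F)`
    (∀ y : Gz, (∀ σ : Γ, σ • y = y) →
      ∃ g ∈ Subgroup.center Gz, (∀ σ : Γ, σ • g = g) ∧
        ∃ h : G, (∀ σ : Γ, σ • h = h) ∧ y = g * P.ι h) := by
  classical
  have sinv : ∀ (σ : Γ) (a : Gz), σ • a⁻¹ = (σ • a)⁻¹ := fun σ a => smul_inv' σ a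
  have scent : ∀ (σ : Γ) (a : Gz), a ∈ Subgroup.center Gz → σ • a ∈ Subgroup.center Gz := by
    intro σ a ha
    rw [Subgroup.mem_center_iff]
    intro b
    have : (σ⁻¹ • b) * a = a * (σ⁻¹ • b) := (Subgroup.mem_center_iff.mp ha _).symm ▸
      (Subgroup.mem_center_iff.mp ha (σ⁻¹ • b))
    calc b * σ • a = σ • ((σ⁻¹ • b) * a) := by rw [smul_mul', smul_inv_smul]
      _ = σ • (a * (σ⁻¹ • b)) := by rw [this]
      _ = σ • a * b := by rw [smul_mul', smul_inv_smul]
  have ha : ∀ x : P.C, (∀ σ : Γ, σ • x = x) →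
      ∃ g ∈ Subgroup.center Gz, (∀ σ : Γ, σ • g = g) ∧ P.π g = x := by
    intro x hx
    obtain ⟨g, hgZ, hgx⟩ := hZbar x
    have hd : ∀ σ : Γ, P.π (g⁻¹ * σ • g) = 1 := by
      intro σ
      rw [map_mul, map_inv, P.π_equiv, hgx, hx σ]
      group
    choose c hc using fun σ => (P.ker_eq _).mp (hd σ)
    have hsg : ∀ σ : Γ, σ • g = g * P.ι (c σ) := by
      intro σ
      rw [hc σ]
      group
    have hcZz : ∀ σ : Γ, P.ι (c σ) ∈ Subgroup.center Gz := by
      intro σ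
      rw [hc σ]
      exact Subgroup.mul_mem _ (Subgroup.inv_mem _ hgZ) (scent σ g hgZ)
    have hcZ : ∀ σ : Γ, c σ ∈ Subgroup.center G := by
      intro σ
      rw [Subgroup.mem_center_iff]
      intro b
      apply P.ι_inj
      rw [map_mul, map_mul, Subgroup.mem_center_iff.mp (hcZz σ) (P.ι b)]
    have hcoc : ∀ σ τ : Γ, c (σ * τ) = c σ * σ • c τ := by
      intro σ τ
      apply P.ι_inj
      rw [map_mul, P.ι_equiv, hc, hc, hc, mul_smul, smul_mul', sinv]
      group
    obtain ⟨z, hzZ, hz⟩ := P.h1Z_inj (fun _ => 1) c (fun _ => Subgroup.one_mem _) hcZ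
      (by intro σ τ; simp) hcoc
      ⟨g, hgZ, by intro σ; rw [map_one, one_mul, hc σ]⟩
    refine ⟨g * (P.ι z)⁻¹, Subgroup.mul_mem _ hgZ (Subgroup.inv_mem _ (P.center_map z hzZ)),
      ?_, ?_⟩
    · intro σ
      have hzσ : P.ι (c σ) = (P.ι z)⁻¹ * σ • P.ι z := by
        rw [hz σ, one_mul, map_mul, map_inv, P.ι_equiv]
      rw [smul_mul', sinv, hsg σ, hzσ]
      group
    · rw [map_mul, map_inv, (P.ker_eq (P.ι z)).mpr ⟨z, rfl⟩, hgx]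
      group
  refine ⟨ha, ?_⟩
  intro y hy
  have hx : ∀ σ : Γ, σ • (P.π y) = P.π y := by
    intro σ
    rw [← P.π_equiv, hy]
  obtain ⟨g, hgZ, hgfix, hgx⟩ := ha (P.π y) hx
  have hk : P.π (g⁻¹ * y) = 1 := by
    rw [map_mul, map_inv, hgx]
    group
  obtain ⟨h, hh⟩ := (P.ker_eq _).mp hk
  refine ⟨g, hgZ, hgfix, h, ?_, ?_⟩
  · intro σ
    apply P.ι_inj
    rw [P.ι_equiv, hh, smul_mul', sinv, hgfix σ, hy σ]
  · rw [hh]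
    group
end

section
/- Let G → G₁ and G → G₂ be pseudo-z-embeddings of connected reductive groups over a p-adic field F. Define G₃ as the pushout G₁ ×_{Z(G)} Z(G₂), i.e. (G₁ × Z(G₂))/{(z, z^{-1}) : z ∈ Z(G)}. Then the map G₁ → G₃, g ↦ (g, 1), is injective with cokernel G₂/G and is a pseudo-z-embedding; likewise, the map G₂ → G₃ sending g₂ = g·z₂ (with g ∈ G, z₂ ∈ Z(G₂)) to (g, z₂) is a well-defined injective homomorphism with cokernel G₁/G and is a pseudo-z-embedding. -/
/-- The action of `Γ` by automorphisms preserves the center. -/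
lemma smul_center_mem {Γ G : Type} [Group Γ] [Group G] [MulDistribMulAction Γ G]
    (σ : Γ) {z : G} (hz : z ∈ Subgroup.center G) : σ • z ∈ Subgroup.center G := by
  rw [Subgroup.mem_center_iff] at hz ⊢
  intro g
  have h1 : g * σ • z = σ • (σ⁻¹ • g * z) := by
    rw [smul_mul', smul_inv_smul]
  have h2 : σ • z * g = σ • (z * σ⁻¹ • g) := by
    rw [smul_mul', smul_inv_smul]
  rw [h1, hz (σ⁻¹ • g), ← h2]

/-!
Everything reduces to the centres. Since `G₃ = j₁(G₁) · j₂(Z(G₂))` with `j₂` central, one has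
`Z(G₃) = j₁(Z(G₁)) · j₂(Z(G₂))`, and two such decompositions differ by the antidiagonal image of
`Z(G)`. Hence a central cocycle of `Gᵢ` that becomes a coboundary in `G₃` is, up to a coboundary,
the image of a central cocycle of `G` whose image in the other factor is a coboundary; injectivity
of `H¹(Z(G)) → H¹(Z(G₁))` and `H¹(Z(G)) → H¹(Z(G₂))` kills it. For surjectivity onto `H¹(Z(G₃))`,
`H¹(Γ, G₂/G) = 1` moves a central cocycle of `G₃` into `j₁(G₁)`; for `G₂ → G₃` this is then
inherited through `G → G₁ → G₃`, which agrees with `G → G₂ → G₃`.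
-/

open Subgroup (center mem_center_iff)

section Cohomology

variable {Γ H K : Type} [Group Γ] [Group H] [Group K]
  [MulDistribMulAction Γ H] [MulDistribMulAction Γ K]

instance Subgroup.center.instMulDistribMulAction : MulDistribMulAction Γ (center H) where
  smul σ z := ⟨σ • (z : H), smul_center_mem σ z.2⟩
  one_smul z := Subtype.ext (one_smul Γ (z : H))
  mul_smul σ τ z := Subtype.ext (mul_smul σ τ (z : H))
  smul_mul σ z w := Subtype.ext (smul_mul' σ (z : H) w)
  smul_one σ := Subtype.ext (smul_one σ)

@[simp, norm_cast]
theorem Subgroup.center.coe_smul (σ : Γ) (z : center H) :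
    ((σ • z : center H) : H) = σ • (z : H) :=
  rfl

theorem mem_center_of_injective {f : H →* K} (hf : Function.Injective f) {g : H}
    (h : f g ∈ center K) : g ∈ center H :=
  mem_center_iff.mpr fun g' => hf <| by rw [map_mul, map_mul, mem_center_iff.mp h]

def IsCocycle (c : Γ → H) : Prop :=
  ∀ σ τ, c (σ * τ) = c σ * σ • c τ

def CentrallyCohomologous (c c' : Γ → H) : Prop :=
  ∃ x ∈ center H, ∀ σ, c' σ = c σ * (x⁻¹ * σ • x)

theorem coboundary_mem_center {x : H} (hx : x ∈ center H) (σ : Γ) :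
    x⁻¹ * σ • x ∈ center H :=
  mul_mem (inv_mem hx) (smul_center_mem σ hx)

theorem coboundary_mul_of_mem_center (x : H) {y : H} (hy : y ∈ center H) (σ : Γ) :
    (x * y)⁻¹ * σ • (x * y) = (x⁻¹ * σ • x) * (y⁻¹ * σ • y) := by
  have hcomm := mem_center_iff.mp (inv_mem hy) (x⁻¹ * σ • x)
  rw [mul_inv_rev, smul_mul', ← mul_assoc, mul_assoc y⁻¹, ← hcomm]
  group

theorem isCocycle_coboundary (x : H) : IsCocycle fun σ : Γ => x⁻¹ * σ • x := by
  intro σ τ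
  simp only [mul_smul, smul_mul', smul_inv', mul_assoc, mul_inv_cancel_left]

theorem IsCocycle.mul_of_mem_center {c c' : Γ → H} (hc : IsCocycle c) (hc' : IsCocycle c')
    (hc'_center : ∀ σ, c' σ ∈ center H) : IsCocycle fun σ => c σ * c' σ := by
  intro σ τ
  have hcomm := mem_center_iff.mp (hc'_center σ) (σ • c τ)
  simp only [hc σ τ, hc' σ τ, smul_mul', mul_assoc, ← mul_assoc (σ • c τ), hcomm]

theorem IsCocycle.inv_of_mem_center {c : Γ → H} (hc : IsCocycle c)
    (hc_center : ∀ σ, c σ ∈ center H) : IsCocycle fun σ => (c σ)⁻¹ := by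
  intro σ τ
  beta_reduce
  rw [hc σ τ, mul_inv_rev, smul_inv']
  exact mem_center_iff.mp (inv_mem (hc_center σ)) _

theorem IsCocycle.map {c : Γ → H} (hc : IsCocycle c) (f : H →* K)
    (hf : ∀ (σ : Γ) (x : H), f (σ • x) = σ • f x) : IsCocycle fun σ => f (c σ) := by
  intro σ τ
  beta_reduce
  rw [hc σ τ, map_mul, hf]

theorem IsCocycle.of_map {c : Γ → H} {f : H →* K} (hf : Function.Injective f)
    (hf_smul : ∀ (σ : Γ) (x : H), f (σ • x) = σ • f x) (hc : IsCocycle fun σ => f (c σ)) :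
    IsCocycle c :=
  fun σ τ => hf <| by rw [map_mul, hf_smul]; exact hc σ τ

theorem CentrallyCohomologous.trans {c c' c'' : Γ → H} (h : CentrallyCohomologous c c')
    (h' : CentrallyCohomologous c' c'') : CentrallyCohomologous c c'' := by
  obtain ⟨x, hx, hcc'⟩ := h
  obtain ⟨y, hy, hc'c''⟩ := h'
  exact ⟨x * y, mul_mem hx hy, fun σ => by
    rw [hc'c'', hcc', coboundary_mul_of_mem_center x hy, mul_assoc]⟩

theorem CentrallyCohomologous.map {c c' : Γ → H} (h : CentrallyCohomologous c c') (f : H →* K)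
    (hf : ∀ (σ : Γ) (x : H), f (σ • x) = σ • f x) (hf_center : ∀ x ∈ center H, f x ∈ center K) :
    CentrallyCohomologous (fun σ => f (c σ)) fun σ => f (c' σ) := by
  obtain ⟨x, hx, hcc'⟩ := h
  exact ⟨f x, hf_center x hx, fun σ => by
    beta_reduce
    rw [hcc', map_mul, map_mul, map_inv, hf]⟩

/-- Injectivity of `H¹(Γ, Z(H)) → H¹(Γ, Z(K))` follows from triviality of its kernel, since
central cocycles form a group. -/
theorem centrallyCohomologous_of_map {f : H →* K}
    (hf : ∀ w : Γ → H, (∀ σ, w σ ∈ center H) → IsCocycle w →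
      CentrallyCohomologous 1 (fun σ => f (w σ)) → CentrallyCohomologous 1 w)
    {c c' : Γ → H} (hc : ∀ σ, c σ ∈ center H) (hc' : ∀ σ, c' σ ∈ center H)
    (hc_cocycle : IsCocycle c) (hc'_cocycle : IsCocycle c')
    (h : CentrallyCohomologous (fun σ => f (c σ)) fun σ => f (c' σ)) :
    CentrallyCohomologous c c' := by
  obtain ⟨x, hx, hfx⟩ := h
  obtain ⟨u, hu, hw⟩ := hf (fun σ => (c σ)⁻¹ * c' σ) (fun σ => mul_mem (inv_mem (hc σ)) (hc' σ))
    ((hc_cocycle.inv_of_mem_center hc).mul_of_mem_center hc'_cocycle hc')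
    ⟨x, hx, fun σ => by simp only [Pi.one_apply, one_mul, map_mul, map_inv, hfx,
      inv_mul_cancel_left]⟩
  simp only [Pi.one_apply, one_mul] at hw
  exact ⟨u, hu, fun σ => by rw [← hw σ, mul_inv_cancel_left]⟩

theorem exists_centrallyCohomologous_of_injective {C : Type} [CommGroup C]
    [MulDistribMulAction Γ C] {j : H →* K} (hj : Function.Injective j)
    (hj_smul : ∀ (σ : Γ) (x : H), j (σ • x) = σ • j x) {q : K →* C}
    (hq_smul : ∀ (σ : Γ) (x : K), q (σ • x) = σ • q x) (hq_ker : ∀ x, q x = 1 ↔ ∃ g, j g = x)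
    (hq_center : ∀ e, ∃ z ∈ center K, q z = e)
    (hC : ∀ c : Γ → C, IsCocycle c → ∃ e, ∀ σ, c σ = e⁻¹ * σ • e)
    {d : Γ → K} (hd : ∀ σ, d σ ∈ center K) (hd_cocycle : IsCocycle d) :
    ∃ a : Γ → H, (∀ σ, a σ ∈ center H) ∧ IsCocycle a ∧
      CentrallyCohomologous (fun σ => j (a σ)) d := by
  obtain ⟨e, he⟩ := hC _ (hd_cocycle.map q hq_smul)
  obtain ⟨z, hz, rfl⟩ := hq_center e
  choose a ha using fun σ => (hq_ker (d σ * (z⁻¹ * σ • z)⁻¹)).mp <| by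
    rw [map_mul, map_inv, map_mul, map_inv, hq_smul, ← he σ, mul_inv_cancel]
  have hdz_center : ∀ σ, d σ * (z⁻¹ * σ • z)⁻¹ ∈ center K :=
    fun σ => mul_mem (hd σ) (inv_mem (coboundary_mem_center hz σ))
  have hdz_cocycle : IsCocycle fun σ => d σ * (z⁻¹ * σ • z)⁻¹ :=
    hd_cocycle.mul_of_mem_center
      ((isCocycle_coboundary z).inv_of_mem_center (coboundary_mem_center hz))
      fun σ => inv_mem (coboundary_mem_center hz σ)
  refine ⟨a, fun σ => mem_center_of_injective hj (by rw [ha]; exact hdz_center σ),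
    IsCocycle.of_map hj hj_smul (by simpa only [ha] using hdz_cocycle), z, hz, fun σ => ?_⟩
  beta_reduce
  rw [ha, inv_mul_cancel_right]

end Cohomology

theorem MonoidHom.exists_apply_mul_eq {A B X Y : Type} [Group A] [Group B] [Group X] [Group Y]
    (φ : A →* X) (ψ : B →* X) (hφψ : ∀ a b, Commute (φ a) (ψ b))
    (hsurj : ∀ x, ∃ a b, x = φ a * ψ b) (f : A →* Y) (g : B →* Y)
    (hfg : ∀ a b, Commute (f a) (g b)) (h : ∀ a b, φ a * ψ b = 1 → f a * g b = 1) :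
    ∃ F : X →* Y, ∀ a b, F (φ a * ψ b) = f a * g b := by
  have hsurj' : Function.Surjective (φ.noncommCoprod ψ hφψ) := fun x => by
    obtain ⟨a, b, rfl⟩ := hsurj x
    exact ⟨(a, b), rfl⟩
  refine ⟨(φ.noncommCoprod ψ hφψ).liftOfSurjective hsurj'
    ⟨f.noncommCoprod g hfg, fun ab hab => h ab.1 ab.2 hab⟩, fun a b => ?_⟩
  exact MonoidHom.liftOfRightInverse_comp_apply _ _ _ _ (a, b)

section Pushout

variable {G G₁ G₂ G₃ : Type} [Group G] [Group G₁] [Group G₂] [Group G₃]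

/-- `G₃` is the pushout `G₁ ×_{Z(G)} Z(G₂)` of `ι₁` and `ι₂` along the center of `G`. -/
structure IsCenterPushout (ι₁ : G →* G₁) (ι₂ : G →* G₂) (j₁ : G₁ →* G₃)
    (j₂ : center G₂ →* G₃) : Prop where
  commute : ∀ g z, Commute (j₁ g) (j₂ z)
  exists_eq_mul : ∀ x, ∃ g z, x = j₁ g * j₂ z
  mul_eq_one_iff : ∀ g z, j₁ g * j₂ z = 1 ↔ ∃ w ∈ center G, ι₁ w = g ∧ ι₂ w = (z : G₂)⁻¹

namespace IsCenterPushout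

variable {ι₁ : G →* G₁} {ι₂ : G →* G₂} {j₁ : G₁ →* G₃} {j₂ : center G₂ →* G₃}

theorem j₂_mem_center (hP : IsCenterPushout ι₁ ι₂ j₁ j₂) (z : center G₂) :
    j₂ z ∈ center G₃ := by
  refine mem_center_iff.mpr fun x => ?_
  obtain ⟨g, w, rfl⟩ := hP.exists_eq_mul x
  have hwz : Commute w z := Subtype.ext (mem_center_iff.mp z.2 w)
  exact ((hP.commute g z).symm.mul_right (hwz.map j₂).symm).eq.symm

theorem injective_j₁ (hP : IsCenterPushout ι₁ ι₂ j₁ j₂) (hι₂ : Function.Injective ι₂) :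
    Function.Injective j₁ := by
  refine (injective_iff_map_eq_one j₁).mpr fun g hg => ?_
  obtain ⟨w, -, rfl, hw⟩ := (hP.mul_eq_one_iff g 1).mp (by rw [map_one, mul_one, hg])
  rw [OneMemClass.coe_one, inv_one, ← map_one ι₂] at hw
  rw [hι₂ hw, map_one]

theorem j₁_ι₁_eq (hP : IsCenterPushout ι₁ ι₂ j₁ j₂) {w : G} (hw : w ∈ center G)
    (hw₂ : ι₂ w ∈ center G₂) : j₁ (ι₁ w) = j₂ ⟨ι₂ w, hw₂⟩ := by
  rw [← mul_inv_eq_one, ← map_inv]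
  exact (hP.mul_eq_one_iff _ _).mpr ⟨w, hw, rfl, by simp⟩

theorem j₁_mem_center_iff (hP : IsCenterPushout ι₁ ι₂ j₁ j₂) (hj₁ : Function.Injective j₁)
    {g : G₁} : j₁ g ∈ center G₃ ↔ g ∈ center G₁ := by
  refine ⟨mem_center_of_injective hj₁, fun hg => mem_center_iff.mpr fun x => ?_⟩
  obtain ⟨g', z, rfl⟩ := hP.exists_eq_mul x
  have hgg' : Commute g g' := (mem_center_iff.mp hg g').symm
  replace hgg' := hgg'.map j₁
  exact (hgg'.mul_right (hP.commute g z)).eq.symm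

theorem exists_mem_center_eq_mul (hP : IsCenterPushout ι₁ ι₂ j₁ j₂)
    (hj₁ : Function.Injective j₁) {x : G₃} (hx : x ∈ center G₃) :
    ∃ a ∈ center G₁, ∃ b, x = j₁ a * j₂ b := by
  obtain ⟨a, b, rfl⟩ := hP.exists_eq_mul x
  refine ⟨a, (hP.j₁_mem_center_iff hj₁).mp ?_, b, rfl⟩
  simpa using mul_mem hx (inv_mem (hP.j₂_mem_center b))

variable {Γ : Type} [Group Γ]

theorem coboundary_j₁_mul_j₂ [MulDistribMulAction Γ G₁] [MulDistribMulAction Γ G₂]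
    [MulDistribMulAction Γ G₃] (hP : IsCenterPushout ι₁ ι₂ j₁ j₂)
    (hj₁_smul : ∀ (σ : Γ) g, j₁ (σ • g) = σ • j₁ g)
    (hj₂_smul : ∀ (σ : Γ) z, j₂ (σ • z) = σ • j₂ z) (a : G₁) (b : center G₂) (σ : Γ) :
    (j₁ a * j₂ b)⁻¹ * σ • (j₁ a * j₂ b) = j₁ (a⁻¹ * σ • a) * j₂ (b⁻¹ * σ • b) := by
  rw [coboundary_mul_of_mem_center _ (hP.j₂_mem_center b), map_mul, map_inv, hj₁_smul, map_mul,
    map_inv, hj₂_smul]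

end IsCenterPushout

end Pushout

section PseudoZEmb

variable {Γ G Gz : Type} [Group Γ] [Group G] [Group Gz] [MulDistribMulAction Γ G]
  [MulDistribMulAction Γ Gz]

theorem PseudoZEmb.centrallyCohomologous_one_of_ι (P : PseudoZEmb Γ G Gz) {w : Γ → G}
    (hw : ∀ σ, w σ ∈ center G) (h : CentrallyCohomologous 1 fun σ => P.ι (w σ)) :
    CentrallyCohomologous 1 w := by
  obtain ⟨x, hx, hwx⟩ := h
  simp only [Pi.one_apply, one_mul] at hwx
  have hw_cocycle : IsCocycle w :=
    IsCocycle.of_map P.ι_inj P.ι_equiv (by simpa only [hwx] using isCocycle_coboundary x)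
  simpa [CentrallyCohomologous] using P.h1Z_inj 1 w (fun _ => one_mem _) hw (fun _ _ => by simp)
    hw_cocycle ⟨x, hx, fun σ => by simpa using hwx σ⟩

end PseudoZEmb

section TwoPseudoZEmb

variable {Γ G G₁ G₂ G₃ : Type} [Group Γ] [Group G] [Group G₁] [Group G₂] [Group G₃]
  [MulDistribMulAction Γ G] [MulDistribMulAction Γ G₁] [MulDistribMulAction Γ G₂]
  {P₁ : PseudoZEmb Γ G G₁} {P₂ : PseudoZEmb Γ G G₂} {j₁ : G₁ →* G₃} {j₂ : center G₂ →* G₃}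
  {κ : G₂ →* G₃}

namespace IsCenterPushout

theorem exists_monoidHom_apply_ι_mul (hP : IsCenterPushout P₁.ι P₂.ι j₁ j₂)
    (hG₂ : ∀ g₂ : G₂, ∃ (g : G) (z : center G₂), g₂ = P₂.ι g * z) :
    ∃ κ : G₂ →* G₃, ∀ (g : G) (z : center G₂), κ (P₂.ι g * z) = j₁ (P₁.ι g) * j₂ z := by
  refine MonoidHom.exists_apply_mul_eq P₂.ι (center G₂).subtype
    (fun g z => mem_center_iff.mp z.2 (P₂.ι g)) hG₂ (j₁.comp P₁.ι) j₂
    (fun g z => hP.commute _ z) fun g z h => ?_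
  have hg : P₂.ι g = (z : G₂)⁻¹ := eq_inv_of_mul_eq_one_left h
  exact (hP.mul_eq_one_iff _ _).mpr
    ⟨g, mem_center_of_injective P₂.ι_inj (hg ▸ inv_mem z.2), rfl, hg⟩

theorem apply_coe_center (hκ : ∀ (g : G) (z : center G₂), κ (P₂.ι g * z) = j₁ (P₁.ι g) * j₂ z)
    (z : center G₂) : κ z = j₂ z := by
  simpa using hκ 1 z

theorem injective_of_apply_ι_mul (hP : IsCenterPushout P₁.ι P₂.ι j₁ j₂)
    (hG₂ : ∀ g₂ : G₂, ∃ (g : G) (z : center G₂), g₂ = P₂.ι g * z)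
    (hκ : ∀ (g : G) (z : center G₂), κ (P₂.ι g * z) = j₁ (P₁.ι g) * j₂ z) :
    Function.Injective κ := by
  refine (injective_iff_map_eq_one κ).mpr fun x hx => ?_
  obtain ⟨g, z, rfl⟩ := hG₂ x
  rw [hκ] at hx
  obtain ⟨w, -, hw₁, hw₂⟩ := (hP.mul_eq_one_iff _ _).mp hx
  rw [← P₁.ι_inj hw₁, hw₂, inv_mul_cancel]

variable [MulDistribMulAction Γ G₃]

theorem centrallyCohomologous_one_of_j₁ (hP : IsCenterPushout P₁.ι P₂.ι j₁ j₂)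
    (hj₁_smul : ∀ (σ : Γ) g, j₁ (σ • g) = σ • j₁ g)
    (hj₂_smul : ∀ (σ : Γ) z, j₂ (σ • z) = σ • j₂ z) {w : Γ → G₁}
    (h : CentrallyCohomologous 1 fun σ => j₁ (w σ)) :
    CentrallyCohomologous 1 w := by
  obtain ⟨x, hx, hwx⟩ := h
  obtain ⟨a, ha, b, rfl⟩ := hP.exists_mem_center_eq_mul (hP.injective_j₁ P₂.ι_inj) hx
  simp only [Pi.one_apply, one_mul, hP.coboundary_j₁_mul_j₂ hj₁_smul hj₂_smul] at hwx
  have hy : ∀ σ, j₁ ((a⁻¹ * σ • a)⁻¹ * w σ) * j₂ (b⁻¹ * σ • b)⁻¹ = 1 := fun σ => by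
    rw [map_mul, map_inv, map_inv, hwx]
    group
  choose v hv_center hv₁ hv₂ using fun σ => (hP.mul_eq_one_iff _ _).mp (hy σ)
  obtain ⟨u, hu, hvu⟩ := P₂.centrallyCohomologous_one_of_ι hv_center
    ⟨b, b.2, fun σ => by simp [hv₂]⟩
  refine ⟨a * P₁.ι u, mul_mem ha (P₁.center_map u hu), fun σ => ?_⟩
  have hwσ := congrArg P₁.ι (hvu σ)
  rw [hv₁, Pi.one_apply, one_mul, map_mul, map_inv, P₁.ι_equiv] at hwσ
  rw [Pi.one_apply, one_mul, coboundary_mul_of_mem_center _ (P₁.center_map u hu), ← hwσ,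
    mul_inv_cancel_left]

theorem centrallyCohomologous_one_of_j₂ (hP : IsCenterPushout P₁.ι P₂.ι j₁ j₂)
    (hj₁_smul : ∀ (σ : Γ) g, j₁ (σ • g) = σ • j₁ g)
    (hj₂_smul : ∀ (σ : Γ) z, j₂ (σ • z) = σ • j₂ z) {w : Γ → G₂}
    (hw : ∀ σ, w σ ∈ center G₂) (h : CentrallyCohomologous 1 fun σ => j₂ ⟨w σ, hw σ⟩) :
    CentrallyCohomologous 1 w := by
  obtain ⟨x, hx, hwx⟩ := h
  obtain ⟨a, ha, b, rfl⟩ := hP.exists_mem_center_eq_mul (hP.injective_j₁ P₂.ι_inj) hx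
  simp only [Pi.one_apply, one_mul] at hwx
  have hy : ∀ σ, j₁ (a⁻¹ * σ • a) * j₂ ((b⁻¹ * σ • b) * ⟨w σ, hw σ⟩⁻¹) = 1 := fun σ => by
    rw [map_mul j₂, map_inv j₂, ← mul_assoc, ← hP.coboundary_j₁_mul_j₂ hj₁_smul hj₂_smul, ← hwx,
      mul_inv_cancel]
  choose v hv_center hv₁ hv₂ using fun σ => (hP.mul_eq_one_iff _ _).mp (hy σ)
  obtain ⟨u, hu, hvu⟩ := P₁.centrallyCohomologous_one_of_ι hv_center
    ⟨a, ha, fun σ => by simp [hv₁]⟩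
  refine ⟨P₂.ι u * b, mul_mem (P₂.center_map u hu) b.2, fun σ => ?_⟩
  have hwσ := congrArg P₂.ι (hvu σ)
  rw [hv₂, Pi.one_apply, one_mul, map_mul, map_inv, P₂.ι_equiv] at hwσ
  push_cast at hwσ
  rw [Pi.one_apply, one_mul, coboundary_mul_of_mem_center _ b.2, ← hwσ]
  group

theorem exists_cokernel_j₁ (hP : IsCenterPushout P₁.ι P₂.ι j₁ j₂)
    (hG₂ : ∀ g₂ : G₂, ∃ (g : G) (z : center G₂), g₂ = P₂.ι g * z)
    (hj₁_smul : ∀ (σ : Γ) g, j₁ (σ • g) = σ • j₁ g)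
    (hj₂_smul : ∀ (σ : Γ) z, j₂ (σ • z) = σ • j₂ z) :
    ∃ q : G₃ →* P₂.C, Function.Surjective q ∧ (∀ x, q x = 1 ↔ ∃ g, j₁ g = x) ∧
      (∀ (σ : Γ) x, q (σ • x) = σ • q x) ∧ ∀ z : center G₂, q (j₂ z) = P₂.π z := by
  obtain ⟨q, hq⟩ := MonoidHom.exists_apply_mul_eq j₁ j₂ hP.commute hP.exists_eq_mul 1
    (P₂.π.comp (center G₂).subtype) (fun _ _ => Commute.one_left _) fun g z h => by
      obtain ⟨w, -, -, hw⟩ := (hP.mul_eq_one_iff g z).mp h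
      simp only [MonoidHom.one_apply, one_mul, MonoidHom.comp_apply, Subgroup.coe_subtype]
      rw [← inv_inv (z : G₂), ← hw, map_inv, (P₂.ker_eq _).mpr ⟨w, rfl⟩, inv_one]
  simp only [MonoidHom.one_apply, one_mul, MonoidHom.comp_apply, Subgroup.coe_subtype] at hq
  have hq₁ : ∀ g, q (j₁ g) = 1 := fun g => by simpa using hq g 1
  have hq₂ : ∀ z, q (j₂ z) = P₂.π z := fun z => by simpa using hq 1 z
  refine ⟨q, fun e => ?_, fun x => ⟨fun hx => ?_, ?_⟩, fun σ x => ?_, hq₂⟩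
  · obtain ⟨y, rfl⟩ := P₂.π_surj e
    obtain ⟨g, z, rfl⟩ := hG₂ y
    exact ⟨j₂ z, by rw [hq₂, map_mul, (P₂.ker_eq _).mpr ⟨g, rfl⟩, one_mul]⟩
  · obtain ⟨g, z, rfl⟩ := hP.exists_eq_mul x
    obtain ⟨h, hh⟩ := (P₂.ker_eq _).mp ((hq g z).symm.trans hx)
    have hh₂ : P₂.ι h ∈ center G₂ := hh ▸ z.2
    refine ⟨g * P₁.ι h, ?_⟩
    rw [map_mul, hP.j₁_ι₁_eq (mem_center_of_injective P₂.ι_inj hh₂) hh₂]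
    simp_rw [hh]
  · rintro ⟨g, rfl⟩
    exact hq₁ g
  · obtain ⟨g, z, rfl⟩ := hP.exists_eq_mul x
    rw [smul_mul', ← hj₁_smul, ← hj₂_smul, hq, hq, Subgroup.center.coe_smul, P₂.π_equiv]

theorem exists_pseudoZEmb_j₁ (hP : IsCenterPushout P₁.ι P₂.ι j₁ j₂)
    (hj₁_smul : ∀ (σ : Γ) g, j₁ (σ • g) = σ • j₁ g)
    (hj₂_smul : ∀ (σ : Γ) z, j₂ (σ • z) = σ • j₂ z) {q : G₃ →* P₂.C}
    (hq_surj : Function.Surjective q) (hq_ker : ∀ x, q x = 1 ↔ ∃ g, j₁ g = x)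
    (hq_smul : ∀ (σ : Γ) x, q (σ • x) = σ • q x) :
    ∃ R : PseudoZEmb Γ G₁ G₃, R.ι = j₁ := by
  have hj₁ := hP.injective_j₁ P₂.ι_inj
  have hq_center : ∀ e, ∃ z ∈ center G₃, q z = e := fun e => by
    obtain ⟨x, rfl⟩ := hq_surj e
    obtain ⟨g, z, rfl⟩ := hP.exists_eq_mul x
    exact ⟨j₂ z, hP.j₂_mem_center z, by rw [map_mul, (hq_ker _).mpr ⟨g, rfl⟩, one_mul]⟩
  exact ⟨⟨P₂.C, j₁, q, hj₁, hq_surj, hq_ker, hj₁_smul, hq_smul, P₂.h1C,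
    fun g hg => (hP.j₁_mem_center_iff hj₁).mpr hg,
    fun c c' hc hc' hcc hcc' => centrallyCohomologous_of_map
      (fun w _ _ => hP.centrallyCohomologous_one_of_j₁ hj₁_smul hj₂_smul) hc hc' hcc hcc',
    fun d hd hdc => exists_centrallyCohomologous_of_injective hj₁ hj₁_smul hq_smul hq_ker
      hq_center P₂.h1C hd hdc⟩, rfl⟩

theorem smul_of_apply_ι_mul (hG₂ : ∀ g₂ : G₂, ∃ (g : G) (z : center G₂), g₂ = P₂.ι g * z)
    (hκ : ∀ (g : G) (z : center G₂), κ (P₂.ι g * z) = j₁ (P₁.ι g) * j₂ z)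
    (hj₁_smul : ∀ (σ : Γ) g, j₁ (σ • g) = σ • j₁ g)
    (hj₂_smul : ∀ (σ : Γ) z, j₂ (σ • z) = σ • j₂ z) (σ : Γ) (x : G₂) :
    κ (σ • x) = σ • κ x := by
  obtain ⟨g, z, rfl⟩ := hG₂ x
  rw [smul_mul', ← P₂.ι_equiv, ← Subgroup.center.coe_smul, hκ, hκ, P₁.ι_equiv, hj₁_smul,
    hj₂_smul, smul_mul']

theorem exists_cokernel_of_apply_ι_mul (hP : IsCenterPushout P₁.ι P₂.ι j₁ j₂)
    (hG₂ : ∀ g₂ : G₂, ∃ (g : G) (z : center G₂), g₂ = P₂.ι g * z)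
    (hκ : ∀ (g : G) (z : center G₂), κ (P₂.ι g * z) = j₁ (P₁.ι g) * j₂ z)
    (hj₁_smul : ∀ (σ : Γ) g, j₁ (σ • g) = σ • j₁ g)
    (hj₂_smul : ∀ (σ : Γ) z, j₂ (σ • z) = σ • j₂ z) :
    ∃ q' : G₃ →* P₁.C, Function.Surjective q' ∧ (∀ x, q' x = 1 ↔ ∃ g, κ g = x) ∧
      ∀ (σ : Γ) x, q' (σ • x) = σ • q' x := by
  obtain ⟨q', hq'⟩ := MonoidHom.exists_apply_mul_eq j₁ j₂ hP.commute hP.exists_eq_mul P₁.π 1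
    (fun _ _ => Commute.one_right _) fun g z h => by
      obtain ⟨w, -, rfl, -⟩ := (hP.mul_eq_one_iff g z).mp h
      rw [MonoidHom.one_apply, mul_one, (P₁.ker_eq _).mpr ⟨w, rfl⟩]
  simp only [MonoidHom.one_apply, mul_one] at hq'
  refine ⟨q', fun e => ?_, fun x => ⟨fun hx => ?_, ?_⟩, fun σ x => ?_⟩
  · obtain ⟨g, rfl⟩ := P₁.π_surj e
    exact ⟨j₁ g, by simpa using hq' g 1⟩
  · obtain ⟨g, z, rfl⟩ := hP.exists_eq_mul x
    obtain ⟨h, rfl⟩ := (P₁.ker_eq _).mp ((hq' g z).symm.trans hx)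
    exact ⟨P₂.ι h * z, hκ h z⟩
  · rintro ⟨g₂, rfl⟩
    obtain ⟨g, z, rfl⟩ := hG₂ g₂
    rw [hκ, hq', (P₁.ker_eq _).mpr ⟨g, rfl⟩]
  · obtain ⟨g, z, rfl⟩ := hP.exists_eq_mul x
    rw [smul_mul', ← hj₁_smul, ← hj₂_smul, hq', hq', P₁.π_equiv]

theorem exists_centrallyCohomologous_of_apply_ι_mul
    (hκ : ∀ (g : G) (z : center G₂), κ (P₂.ι g * z) = j₁ (P₁.ι g) * j₂ z)
    (R₁ : PseudoZEmb Γ G₁ G₃) (hR₁ : R₁.ι = j₁) {d : Γ → G₃} (hd : ∀ σ, d σ ∈ center G₃)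
    (hd_cocycle : IsCocycle d) :
    ∃ c : Γ → G₂, (∀ σ, c σ ∈ center G₂) ∧ IsCocycle c ∧
      CentrallyCohomologous (fun σ => κ (c σ)) d := by
  obtain ⟨a, ha, ha_cocycle, had⟩ := R₁.h1Z_surj d hd hd_cocycle
  obtain ⟨c, hc, hc_cocycle, hca⟩ := P₁.h1Z_surj a ha ha_cocycle
  refine ⟨fun σ => P₂.ι (c σ), fun σ => P₂.center_map _ (hc σ),
    IsCocycle.map hc_cocycle P₂.ι P₂.ι_equiv, ?_⟩
  have hκ_ι : ∀ g, κ (P₂.ι g) = R₁.ι (P₁.ι g) := fun g => by simpa [hR₁] using hκ g 1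
  simp only [hκ_ι]
  exact (CentrallyCohomologous.map (c := fun σ => P₁.ι (c σ)) hca R₁.ι R₁.ι_equiv
    R₁.center_map).trans had

theorem exists_pseudoZEmb_of_apply_ι_mul (hP : IsCenterPushout P₁.ι P₂.ι j₁ j₂)
    (hG₂ : ∀ g₂ : G₂, ∃ (g : G) (z : center G₂), g₂ = P₂.ι g * z)
    (hκ : ∀ (g : G) (z : center G₂), κ (P₂.ι g * z) = j₁ (P₁.ι g) * j₂ z)
    (hj₁_smul : ∀ (σ : Γ) g, j₁ (σ • g) = σ • j₁ g)
    (hj₂_smul : ∀ (σ : Γ) z, j₂ (σ • z) = σ • j₂ z)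
    (R₁ : PseudoZEmb Γ G₁ G₃) (hR₁ : R₁.ι = j₁) {q' : G₃ →* P₁.C}
    (hq'_surj : Function.Surjective q') (hq'_ker : ∀ x, q' x = 1 ↔ ∃ g, κ g = x)
    (hq'_smul : ∀ (σ : Γ) x, q' (σ • x) = σ • q' x) :
    ∃ R : PseudoZEmb Γ G₂ G₃, R.ι = κ := by
  have hκ_center : ∀ w : Γ → G₂, ∀ hw : ∀ σ, w σ ∈ center G₂,
      (fun σ => κ (w σ)) = fun σ => j₂ ⟨w σ, hw σ⟩ :=
    fun w hw => funext fun σ => apply_coe_center hκ ⟨w σ, hw σ⟩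
  exact ⟨⟨P₁.C, κ, q', hP.injective_of_apply_ι_mul hG₂ hκ, hq'_surj, hq'_ker,
    smul_of_apply_ι_mul hG₂ hκ hj₁_smul hj₂_smul, hq'_smul, P₁.h1C,
    fun x hx => apply_coe_center hκ ⟨x, hx⟩ ▸ hP.j₂_mem_center ⟨x, hx⟩,
    fun c c' hc hc' hcc hcc' => centrallyCohomologous_of_map (fun w hw _ h =>
      hP.centrallyCohomologous_one_of_j₂ hj₁_smul hj₂_smul hw (hκ_center w hw ▸ h))
      hc hc' hcc hcc',
    fun d hd hdc => exists_centrallyCohomologous_of_apply_ι_mul hκ R₁ hR₁ hd hdc⟩, rfl⟩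

end IsCenterPushout

end TwoPseudoZEmb

/-- Let `G → G₁` and `G → G₂` be pseudo-z-embeddings over a `p`-adic
field, and let `G₃ = G₁ ×_{Z(G)} Z(G₂)` be the pushout, presented by the maps
`j₁ : G₁ → G₃` and `j₂ : Z(G₂) → G₃` with commuting images, joint surjectivity, and
kernel the antidiagonal copy of `Z(G)`. Then `j₁` is injective with cokernel `G₂/G` and
is a pseudo-z-embedding; likewise `g₂ = g·z₂ ↦ (g, z₂)` is a well-defined injective
homomorphism `G₂ → G₃` with cokernel `G₁/G` and is a pseudo-z-embedding. -/
theorem pushout_of_two_pseudoZEmb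
    {Γ G G₁ G₂ G₃ : Type} [Group Γ] [Group G] [Group G₁] [Group G₂] [Group G₃]
    [MulDistribMulAction Γ G] [MulDistribMulAction Γ G₁] [MulDistribMulAction Γ G₂]
    [MulDistribMulAction Γ G₃]
    (P₁ : PseudoZEmb Γ G G₁) (P₂ : PseudoZEmb Γ G G₂)
    -- over `F̄` one has `G₂ = G · Z(G₂)`
    (hG₂gen : ∀ g₂ : G₂, ∃ (g : G) (z : ↥(Subgroup.center G₂)), g₂ = P₂.ι g * ↑z)
    -- pushout data for `G₃ = (G₁ × Z(G₂)) / {(z, z⁻¹) : z ∈ Z(G)}`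
    (j₁ : G₁ →* G₃) (j₂ : ↥(Subgroup.center G₂) →* G₃)
    (hj₁_equiv : ∀ (σ : Γ) (g : G₁), j₁ (σ • g) = σ • j₁ g)
    (hj₂_equiv : ∀ (σ : Γ) (z : ↥(Subgroup.center G₂)),
      j₂ ⟨σ • (z : G₂), smul_center_mem σ z.2⟩ = σ • j₂ z)
    (hcomm : ∀ (g : G₁) (z : ↥(Subgroup.center G₂)), j₁ g * j₂ z = j₂ z * j₁ g)
    (hsurj : ∀ x : G₃, ∃ (g : G₁) (z : ↥(Subgroup.center G₂)), x = j₁ g * j₂ z)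
    (hker : ∀ (g : G₁) (z : ↥(Subgroup.center G₂)),
      j₁ g * j₂ z = 1 ↔
        ∃ w : G, w ∈ Subgroup.center G ∧ P₁.ι w = g ∧ P₂.ι w = (↑z)⁻¹) :
    -- `j₁ : G₁ → G₃` is injective
    Function.Injective j₁ ∧
    -- the cokernel of `j₁` is `G₂/G`
    (∃ q : G₃ →* P₂.C, Function.Surjective q ∧
      (∀ x : G₃, q x = 1 ↔ ∃ g : G₁, j₁ g = x) ∧
      (∀ (σ : Γ) (x : G₃), q (σ • x) = σ • q x) ∧
      (∀ z : ↥(Subgroup.center G₂), q (j₂ z) = P₂.π ↑z)) ∧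
    -- `G₁ → G₃` is a pseudo-z-embedding
    (∃ R₁ : PseudoZEmb Γ G₁ G₃, R₁.ι = j₁) ∧
    -- `G₂ → G₃`, `g·z₂ ↦ (g, z₂)`, is a well-defined injective homomorphism and a
    -- pseudo-z-embedding, with cokernel `G₁/G`
    (∃ κ : G₂ →* G₃,
      (∀ (g : G) (z : ↥(Subgroup.center G₂)), κ (P₂.ι g * ↑z) = j₁ (P₁.ι g) * j₂ z) ∧
      Function.Injective κ ∧
      (∃ q' : G₃ →* P₁.C, Function.Surjective q' ∧
        (∀ x : G₃, q' x = 1 ↔ ∃ g : G₂, κ g = x)) ∧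
      ∃ R₂ : PseudoZEmb Γ G₂ G₃, R₂.ι = κ) := by
  have hP : IsCenterPushout P₁.ι P₂.ι j₁ j₂ := ⟨hcomm, hsurj, hker⟩
  obtain ⟨q, hq_surj, hq_ker, hq_smul, hq_j₂⟩ :=
    hP.exists_cokernel_j₁ hG₂gen hj₁_equiv hj₂_equiv
  obtain ⟨R₁, hR₁⟩ := hP.exists_pseudoZEmb_j₁ hj₁_equiv hj₂_equiv hq_surj hq_ker hq_smul
  obtain ⟨κ, hκ⟩ := hP.exists_monoidHom_apply_ι_mul hG₂gen
  obtain ⟨q', hq'_surj, hq'_ker, hq'_smul⟩ :=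
    hP.exists_cokernel_of_apply_ι_mul hG₂gen hκ hj₁_equiv hj₂_equiv
  exact ⟨hP.injective_j₁ P₂.ι_inj, ⟨q, hq_surj, hq_ker, hq_smul, hq_j₂⟩, ⟨R₁, hR₁⟩, κ, hκ,
    hP.injective_of_apply_ι_mul hG₂gen hκ, ⟨q', hq'_surj, hq'_ker⟩,
    hP.exists_pseudoZEmb_of_apply_ι_mul hG₂gen hκ hj₁_equiv hj₂_equiv R₁ hR₁ hq'_surj hq'_ker
      hq'_smul⟩
end

section
/- Every connected reductive group G over a p-adic field F admits a z-embedding: an embedding G → G_z into a connected reductive group G_z with connected center such that G_z/G is an induced torus, H^1(F, G_z/G) = 1, and H^1(F, Z(G)) → H^1(F, Z(G_z)) is bijective. Concretely, given an embedding Z(G) → T with T/Z(G) induced and H^1(F,Z(G)) → H^1(F,T) bijective, the pushout G_z = (G × T)/Z(G) works: T → G_z identifies T with Z(G_z), G → G_z is injective, and G_z/G ≅ T/Z(G). -/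
/-- Every connected reductive group `G` over a `p`-adic field admits a
z-embedding. Concretely (modeled at the level of `F̄`-points with Galois action): given
an embedding `Z(G) → T` of the center into a torus `T` with `T/Z(G)` induced (so
`H¹(Γ, T/Z(G)) = 1`) and `H¹(Γ, Z(G)) → H¹(Γ, T)` bijective, the pushout
`G_z = (G × T)/Z(G)` works: `T → G_z` identifies `T` with `Z(G_z)`, `G → G_z` is
injective, `G_z/G ≅ T/Z(G)` is a torus with trivial `H¹`, and
`H¹(Γ, Z(G)) → H¹(Γ, Z(G_z))` is bijective. -/
theorem z_embedding_from_pushout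
    {Γ Z T C G Gz : Type} [Group Γ] [CommGroup Z] [CommGroup T] [CommGroup C]
    [Group G] [Group Gz]
    [MulDistribMulAction Γ Z] [MulDistribMulAction Γ T] [MulDistribMulAction Γ C]
    [MulDistribMulAction Γ G] [MulDistribMulAction Γ Gz]
    -- `a : Z(G) → G` realizes `Z` as the center of `G`; `b : Z → T` is the embedding
    (a : Z →* G) (b : Z →* T) (cT : T →* C)
    (ha_inj : Function.Injective a) (hb_inj : Function.Injective b)
    (ha_range : ∀ g : G, g ∈ Subgroup.center G ↔ ∃ z : Z, a z = g)
    (hcT_surj : Function.Surjective cT)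
    (hcT_ker : ∀ t : T, cT t = 1 ↔ ∃ z : Z, b z = t)
    (ha_equiv : ∀ (σ : Γ) (z : Z), a (σ • z) = σ • a z)
    (hb_equiv : ∀ (σ : Γ) (z : Z), b (σ • z) = σ • b z)
    (hcT_equiv : ∀ (σ : Γ) (t : T), cT (σ • t) = σ • cT t)
    -- `C = T/Z` is an induced torus, so `H¹(Γ, C) = 1`
    (hC1 : ∀ c : Γ → C, (∀ σ τ : Γ, c (σ * τ) = c σ * σ • c τ) →
      ∃ x : C, ∀ σ : Γ, c σ = x⁻¹ * σ • x)
    -- `H¹(Γ, Z) → H¹(Γ, T)` is bijective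
    (hZT_inj : ∀ c c' : Γ → Z, (∀ σ τ : Γ, c (σ * τ) = c σ * σ • c τ) →
      (∀ σ τ : Γ, c' (σ * τ) = c' σ * σ • c' τ) →
      (∃ t : T, ∀ σ : Γ, b (c' σ) = b (c σ) * (t⁻¹ * σ • t)) →
      ∃ z : Z, ∀ σ : Γ, c' σ = c σ * (z⁻¹ * σ • z))
    (hZT_surj : ∀ d : Γ → T, (∀ σ τ : Γ, d (σ * τ) = d σ * σ • d τ) →
      ∃ c : Γ → Z, (∀ σ τ : Γ, c (σ * τ) = c σ * σ • c τ) ∧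
        ∃ t : T, ∀ σ : Γ, d σ = b (c σ) * (t⁻¹ * σ • t))
    -- pushout data for `G_z = (G × T)/Z(G)`
    (j : G →* Gz) (jT : T →* Gz)
    (hj_equiv : ∀ (σ : Γ) (g : G), j (σ • g) = σ • j g)
    (hjT_equiv : ∀ (σ : Γ) (t : T), jT (σ • t) = σ • jT t)
    (hcomm : ∀ (g : G) (t : T), j g * jT t = jT t * j g)
    (hsurj : ∀ x : Gz, ∃ (g : G) (t : T), x = j g * jT t)
    (hker : ∀ (g : G) (t : T), j g * jT t = 1 ↔ ∃ z : Z, g = a z ∧ t = (b z)⁻¹) :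
    -- `G → G_z` and `T → G_z` are injective
    (Function.Injective j ∧ Function.Injective jT) ∧
    -- `T → G_z` identifies `T` with `Z(G_z)`
    (∀ x : Gz, x ∈ Subgroup.center Gz ↔ ∃ t : T, jT t = x) ∧
    -- `G_z/G ≅ T/Z(G) = C`
    (∃ q : Gz →* C, (∀ t : T, q (jT t) = cT t) ∧ Function.Surjective q ∧
      (∀ x : Gz, q x = 1 ↔ ∃ g : G, j g = x) ∧
      (∀ (σ : Γ) (x : Gz), q (σ • x) = σ • q x)) ∧
    -- `H¹(Γ, G_z/G) = 1`
    (∀ d : Γ → Gz, (∀ σ τ : Γ, (d σ * σ • d τ)⁻¹ * d (σ * τ) ∈ j.range) →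
      ∃ x : Gz, ∀ σ : Γ, (x⁻¹ * σ • x)⁻¹ * d σ ∈ j.range) ∧
    -- `H¹(Γ, Z(G)) → H¹(Γ, Z(G_z))` is bijective
    ((∀ c c' : Γ → Z, (∀ σ τ : Γ, c (σ * τ) = c σ * σ • c τ) →
        (∀ σ τ : Γ, c' (σ * τ) = c' σ * σ • c' τ) →
        (∃ x ∈ Subgroup.center Gz, ∀ σ : Γ, j (a (c' σ)) = j (a (c σ)) * (x⁻¹ * σ • x)) →
        ∃ z : Z, ∀ σ : Γ, c' σ = c σ * (z⁻¹ * σ • z)) ∧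
      (∀ d : Γ → Gz, (∀ σ : Γ, d σ ∈ Subgroup.center Gz) →
        (∀ σ τ : Γ, d (σ * τ) = d σ * σ • d τ) →
        ∃ c : Γ → Z, (∀ σ τ : Γ, c (σ * τ) = c σ * σ • c τ) ∧
          ∃ x ∈ Subgroup.center Gz, ∀ σ : Γ, d σ = j (a (c σ)) * (x⁻¹ * σ • x))) := by

  -- `j ∘ a = jT ∘ b`
  have hja : ∀ z : Z, j (a z) = jT (b z) := by
    intro z
    have h := (hker (a z) (b z)⁻¹).mpr ⟨z, rfl, rfl⟩
    rw [map_inv] at h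
    exact eq_of_mul_inv_eq_one h
  -- injectivity of `j` and `jT`
  have hj_inj : Function.Injective j := by
    rw [injective_iff_map_eq_one]
    intro g hg
    have h1 : j g * jT 1 = 1 := by simpa using hg
    obtain ⟨z, hz1, hz2⟩ := (hker _ _).mp h1
    have hbz : b z = 1 := by
      have := hz2.symm
      rwa [inv_eq_one] at this
    have hz : z = 1 := hb_inj (by simpa using hbz)
    rw [hz1, hz, map_one]
  have hjT_inj : Function.Injective jT := by
    rw [injective_iff_map_eq_one]
    intro t ht
    have h1 : j 1 * jT t = 1 := by simpa using ht
    obtain ⟨z, hz1, hz2⟩ := (hker _ _).mp h1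
    have hz : z = 1 := ha_inj (by simpa using hz1.symm)
    rw [hz2, hz, map_one, inv_one]
  -- elements of `jT.range` are central
  have hTcomm : ∀ (t : T) (x : Gz), jT t * x = x * jT t := by
    intro t x
    obtain ⟨g, t', rfl⟩ := hsurj x
    calc jT t * (j g * jT t') = (jT t * j g) * jT t' := by rw [mul_assoc]
      _ = (j g * jT t) * jT t' := by rw [hcomm]
      _ = j g * jT (t * t') := by rw [mul_assoc, ← map_mul]
      _ = j g * jT (t' * t) := by rw [mul_comm t t']
      _ = j g * jT t' * jT t := by rw [map_mul, mul_assoc]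
  -- the center of `Gz` is exactly `jT.range`
  have hcenter : ∀ x : Gz, x ∈ Subgroup.center Gz ↔ ∃ t : T, jT t = x := by
    intro x
    constructor
    · intro hx
      obtain ⟨g, t, rfl⟩ := hsurj x
      have hgc : ∀ g' : G, g' * g = g * g' := by
        intro g'
        have h1 := (Subgroup.mem_center_iff.mp hx) (j g')
        have h2 : j g' * j g * jT t = j g * j g' * jT t := by
          calc j g' * j g * jT t = j g' * (j g * jT t) := by rw [mul_assoc]
            _ = (j g * jT t) * j g' := h1
            _ = j g * (jT t * j g') := by rw [mul_assoc]
            _ = j g * (j g' * jT t) := by rw [hcomm]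
            _ = j g * j g' * jT t := by rw [mul_assoc]
        have h3 : j (g' * g) = j (g * g') := by
          rw [map_mul, map_mul]
          exact mul_right_cancel h2
        exact hj_inj h3
      obtain ⟨z, hz⟩ := (ha_range g).mp (Subgroup.mem_center_iff.mpr hgc)
      exact ⟨b z * t, by rw [map_mul, ← hja, hz]⟩
    · rintro ⟨t, rfl⟩
      exact Subgroup.mem_center_iff.mpr fun y => (hTcomm t y).symm
  -- decomposition of every element
  choose gOf tOf hx using hsurj
  -- well-definedness of the `T`-component modulo `Z`
  have hwd : ∀ (g : G) (t : T) (g' : G) (t' : T),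
      j g * jT t = j g' * jT t' → cT t = cT t' := by
    intro g t g' t' h
    have h1 : j (g'⁻¹ * g) * jT (t * t'⁻¹) = 1 := by
      rw [map_mul, map_inv, map_mul, map_inv]
      calc (j g')⁻¹ * j g * (jT t * (jT t')⁻¹)
          = (j g')⁻¹ * (j g * jT t) * (jT t')⁻¹ := by group
        _ = (j g')⁻¹ * (j g' * jT t') * (jT t')⁻¹ := by rw [h]
        _ = 1 := by group
    obtain ⟨z, _, hz2⟩ := (hker _ _).mp h1
    have ht : t = t' * (b z)⁻¹ := by
      have : t * t'⁻¹ * t' = (b z)⁻¹ * t' := by rw [hz2]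
      rw [inv_mul_cancel_right] at this
      rw [this, mul_comm]
    have hbz1 : cT (b z) = 1 := (hcT_ker (b z)).mpr ⟨z, rfl⟩
    rw [ht, map_mul, map_inv, hbz1, inv_one, mul_one]
  -- define the quotient map `q : Gz →* C`
  have hq0 : ∀ (g : G) (t : T), cT (tOf (j g * jT t)) = cT t :=
    fun g t => hwd _ _ g t (hx _).symm
  refine ⟨⟨hj_inj, hjT_inj⟩, hcenter, ?_, ?_, ?_, ?_⟩
  · -- the quotient map
    refine ⟨{ toFun := fun x => cT (tOf x), map_one' := ?_, map_mul' := ?_ }, ?_, ?_, ?_, ?_⟩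
    · show cT (tOf (1 : Gz)) = 1
      have : (1 : Gz) = j 1 * jT 1 := by simp
      rw [this, hq0, map_one]
    · intro x y
      show cT (tOf (x * y)) = cT (tOf x) * cT (tOf y)
      have hxy : x * y = j (gOf x * gOf y) * jT (tOf x * tOf y) := by
        rw [map_mul, map_mul]
        conv_lhs => rw [hx x, hx y]
        calc j (gOf x) * jT (tOf x) * (j (gOf y) * jT (tOf y))
            = j (gOf x) * (jT (tOf x) * j (gOf y)) * jT (tOf y) := by group
          _ = j (gOf x) * (j (gOf y) * jT (tOf x)) * jT (tOf y) := by rw [hcomm]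
          _ = j (gOf x) * j (gOf y) * (jT (tOf x) * jT (tOf y)) := by group
      rw [hxy, hq0, map_mul]
    · intro t
      have : jT t = j 1 * jT t := by simp
      simp only [MonoidHom.coe_mk, OneHom.coe_mk]
      rw [this, hq0]
    · intro c
      obtain ⟨t, ht⟩ := hcT_surj c
      refine ⟨jT t, ?_⟩
      simp only [MonoidHom.coe_mk, OneHom.coe_mk]
      have : jT t = j 1 * jT t := by simp
      rw [this, hq0, ht]
    · intro x
      simp only [MonoidHom.coe_mk, OneHom.coe_mk]
      constructor
      · intro hx1
        obtain ⟨z, hz⟩ := (hcT_ker (tOf x)).mp hx1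
        refine ⟨gOf x * a z, ?_⟩
        rw [map_mul, hja, hz, ← hx x]
      · rintro ⟨g, rfl⟩
        have : j g = j g * jT 1 := by simp
        rw [this, hq0, map_one]
    · intro σ x
      simp only [MonoidHom.coe_mk, OneHom.coe_mk]
      conv_lhs => rw [hx x]
      rw [smul_mul', ← hj_equiv, ← hjT_equiv, hq0, hcT_equiv]
  · -- `H¹(Γ, C) = 1` implies triviality for the quotient cocycles
    intro d hd
    set q : Gz → C := fun x => cT (tOf x) with hqdef
    have hqmul : ∀ x y : Gz, q (x * y) = q x * q y := by
      intro x y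
      have hxy : x * y = j (gOf x * gOf y) * jT (tOf x * tOf y) := by
        rw [map_mul, map_mul]
        conv_lhs => rw [hx x, hx y]
        calc j (gOf x) * jT (tOf x) * (j (gOf y) * jT (tOf y))
            = j (gOf x) * (jT (tOf x) * j (gOf y)) * jT (tOf y) := by group
          _ = j (gOf x) * (j (gOf y) * jT (tOf x)) * jT (tOf y) := by rw [hcomm]
          _ = j (gOf x) * j (gOf y) * (jT (tOf x) * jT (tOf y)) := by group
      simp only [hqdef]
      rw [hxy, hq0, map_mul]
    have hqinv : ∀ x : Gz, q x⁻¹ = (q x)⁻¹ := by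
      intro x
      have h1 : q (x⁻¹ * x) = q x⁻¹ * q x := hqmul _ _
      rw [inv_mul_cancel] at h1
      have hone : q (1 : Gz) = 1 := by
        simp only [hqdef]
        have : (1 : Gz) = j 1 * jT 1 := by simp
        rw [this, hq0, map_one]
      rw [hone] at h1
      exact eq_inv_of_mul_eq_one_left h1.symm
    have hqjT : ∀ t : T, q (jT t) = cT t := by
      intro t
      simp only [hqdef]
      have : jT t = j 1 * jT t := by simp
      rw [this, hq0]
    have hqj : ∀ g : G, q (j g) = 1 := by
      intro g
      simp only [hqdef]
      have : j g = j g * jT 1 := by simp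
      rw [this, hq0, map_one]
    have hqsmul : ∀ (σ : Γ) (x : Gz), q (σ • x) = σ • q x := by
      intro σ x
      simp only [hqdef]
      conv_lhs => rw [hx x]
      rw [smul_mul', ← hj_equiv, ← hjT_equiv, hq0, hcT_equiv]
    have hqker : ∀ y : Gz, q y = 1 → y ∈ j.range := by
      intro y hy
      simp only [hqdef] at hy
      obtain ⟨z, hz⟩ := (hcT_ker (tOf y)).mp hy
      exact ⟨gOf y * a z, by rw [map_mul, hja, hz, ← hx y]⟩
    -- the induced cocycle in C
    have hcoc : ∀ σ τ : Γ, q (d (σ * τ)) = q (d σ) * σ • q (d τ) := by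
      intro σ τ
      obtain ⟨g, hg⟩ := hd σ τ
      have : d (σ * τ) = d σ * σ • d τ * j g := by
        rw [hg, mul_inv_cancel_left]
      rw [this, hqmul, hqmul, hqj, mul_one, hqsmul]
    obtain ⟨x0, hx0⟩ := hC1 (fun σ => q (d σ)) hcoc
    obtain ⟨t0, ht0⟩ := hcT_surj x0
    refine ⟨jT t0, fun σ => ?_⟩
    apply hqker
    rw [hqmul, hqinv, hqmul, hqinv, hqjT, hqsmul, hqjT, ht0]
    rw [← hx0 σ]
    group
  · -- injectivity of H¹(Z) → H¹(Z(Gz))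
    intro c c' hc hc' ⟨x, hxc, hrel⟩
    obtain ⟨t, rfl⟩ := (hcenter x).mp hxc
    refine hZT_inj c c' hc hc' ⟨t, fun σ => ?_⟩
    apply hjT_inj
    have h1 := hrel σ
    rw [hja, hja, ← hjT_equiv] at h1
    rw [h1, map_mul, map_mul, map_inv]
  · -- surjectivity of H¹(Z) → H¹(Z(Gz))
    intro d hdc hdcoc
    choose e he using fun σ => (hcenter (d σ)).mp (hdc σ)
    have hecoc : ∀ σ τ : Γ, e (σ * τ) = e σ * σ • e τ := by
      intro σ τ
      apply hjT_inj
      rw [map_mul, he, he, hdcoc, ← he τ, hjT_equiv]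
    obtain ⟨c, hc, t, ht⟩ := hZT_surj e hecoc
    refine ⟨c, hc, jT t, (hcenter _).mpr ⟨t, rfl⟩, fun σ => ?_⟩
    rw [← he σ, ht σ, hja, ← hjT_equiv]
    rw [map_mul, map_mul, map_inv]
end

section
/- Let 1 → Ĉ → Ĝ_z → Ĝ → 1 be a short exact sequence of complex Lie groups (or linear algebraic groups over ℂ) with Ĉ a central torus, equipped with a continuous action of a topological group L preserving the sequence. Suppose φ_z : L → Ĝ_z is a continuous 1-cocycle with image φ in Z^1(L, Ĝ), and suppose the orbit map of H^1(L, Ĉ) on the class of φ_z (by pointwise multiplication of cocycles) is injective. Then there is an exact sequence of groups 1 → Ĉ^L → S_{φ_z} → S_φ → 1, where S_{φ_z} = Cent(φ_z, Ĝ_z) and S_φ = Cent(φ, Ĝ) are the twisted-invariant subgroups (stabilizers of the cocycles under the twisted actions). -/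
/-- Let `1 → Ĉ → Ĝ_z → Ĝ → 1` be an exact sequence of groups with `Ĉ`
a central (torus) subgroup, equipped with an action of a group `L` preserving the
sequence. Let `φ_z : L → Ĝ_z` be a 1-cocycle with image `φ` in `Z¹(L, Ĝ)`, and suppose
that the orbit map of `H¹(L, Ĉ)` through the class of `φ_z` (pointwise multiplication of
cocycles) is injective. Then there is an exact sequence
`1 → Ĉ^L → S_{φ_z} → S_φ → 1` of twisted centralizers. -/
theorem twisted_centralizer_exact_sequence
    {L C Gz G : Type} [Group L] [CommGroup C] [Group Gz] [Group G]
    [MulDistribMulAction L C] [MulDistribMulAction L Gz] [MulDistribMulAction L G]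
    (inc : C →* Gz) (p : Gz →* G)
    (hinc_inj : Function.Injective inc) (hp_surj : Function.Surjective p)
    (hcentral : ∀ c : C, inc c ∈ Subgroup.center Gz)
    (hexact : ∀ x : Gz, p x = 1 ↔ ∃ c : C, inc c = x)
    (hinc_equiv : ∀ (l : L) (c : C), inc (l • c) = l • inc c)
    (hp_equiv : ∀ (l : L) (x : Gz), p (l • x) = l • p x)
    (φz : L → Gz)
    (hφz : ∀ l l' : L, φz (l * l') = φz l * l • φz l')
    -- the orbit map of `H¹(L, Ĉ)` through the class of `φ_z` is injective
    (horbit : ∀ c : L → C, (∀ l l' : L, c (l * l') = c l * l • c l') →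
      (∃ g : Gz, ∀ l : L, inc (c l) * φz l = g⁻¹ * (φz l * l • g)) →
      ∃ z : C, ∀ l : L, c l = z⁻¹ * l • z) :
    -- exactness of `1 → Ĉ^L → S_{φ_z} → S_φ → 1`:
    -- `Ĉ^L` lands in the twisted centralizer `S_{φ_z}`
    (∀ c : C, (∀ l : L, l • c = c) →
      ∀ l : L, (inc c)⁻¹ * (φz l * l • inc c) = φz l) ∧
    -- `p` maps `S_{φ_z}` into `S_φ`
    (∀ m : Gz, (∀ l : L, m⁻¹ * (φz l * l • m) = φz l) →
      ∀ l : L, (p m)⁻¹ * (p (φz l) * l • p m) = p (φz l)) ∧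
    -- the kernel of `S_{φ_z} → S_φ` is exactly `Ĉ^L`
    (∀ m : Gz, (∀ l : L, m⁻¹ * (φz l * l • m) = φz l) →
      (p m = 1 ↔ ∃ c : C, (∀ l : L, l • c = c) ∧ inc c = m)) ∧
    -- `S_{φ_z} → S_φ` is surjective
    (∀ s : G, (∀ l : L, s⁻¹ * (p (φz l) * l • s) = p (φz l)) →
      ∃ m : Gz, (∀ l : L, m⁻¹ * (φz l * l • m) = φz l) ∧ p m = s) := by

  have hcomm : ∀ (c : C) (a : Gz), inc c * a = a * inc c := fun c a =>
    ((Subgroup.mem_center_iff.mp (hcentral c)) a).symm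
  have hpinc : ∀ c : C, p (inc c) = 1 := fun c => (hexact (inc c)).mpr ⟨c, rfl⟩
  refine ⟨?_, ?_, ?_, ?_⟩
  · intro c hc l
    rw [← hinc_equiv, hc l, ← hcomm, inv_mul_cancel_left]
  · intro m hm l
    rw [← hp_equiv, ← map_mul, ← map_inv, ← map_mul, hm l]
  · intro m hm
    constructor
    · intro hpm
      obtain ⟨c, hcm⟩ := (hexact m).mp hpm
      refine ⟨c, fun l => ?_, hcm⟩
      apply hinc_inj
      rw [hinc_equiv, hcm]
      have h := hm l
      have h2 : φz l * l • m = m * φz l := by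
        have := congrArg (fun x => m * x) h
        simpa [mul_assoc] using this
      have h3 : m * φz l = φz l * m := by rw [← hcm, hcomm]
      rw [h3] at h2
      exact mul_left_cancel h2
    · rintro ⟨c, _, hcm⟩
      rw [← hcm]; exact hpinc c
  · intro s hs
    obtain ⟨g, hg⟩ := hp_surj s
    set x : L → Gz := fun l => g⁻¹ * (φz l * l • g) * (φz l)⁻¹ with hx
    have hpx : ∀ l, p (x l) = 1 := by
      intro l
      have : p (x l) = (p g)⁻¹ * (p (φz l) * l • p g) * (p (φz l))⁻¹ := by
        simp [hx, hp_equiv]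
      rw [this, hg, hs l, mul_inv_cancel]
    choose c hc using fun l => (hexact (x l)).mp (hpx l)
    have hgx : ∀ l, g * inc (c l) = φz l * l • g * (φz l)⁻¹ := by
      intro l
      rw [hc l, hx]
      group
    have hcoc : ∀ l l' : L, c (l * l') = c l * l • c l' := by
      intro l l'
      apply hinc_inj
      apply mul_left_cancel (a := g)
      rw [map_mul, hinc_equiv, ← mul_assoc, hgx (l * l'), hgx l, hφz]
      symm
      calc φz l * l • g * (φz l)⁻¹ * (l • inc (c l'))
          = φz l * l • g * (l • inc (c l')) * (φz l)⁻¹ := by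
            rw [mul_assoc (φz l * l • g), ← hinc_equiv, ← hcomm, hinc_equiv, ← mul_assoc]
        _ = φz l * l • (g * inc (c l')) * (φz l)⁻¹ := by rw [mul_assoc (φz l), ← smul_mul']
        _ = φz l * l • (φz l' * l' • g * (φz l')⁻¹) * (φz l)⁻¹ := by rw [hgx l']
        _ = φz l * l • φz l' * (l * l') • g * (φz l * l • φz l')⁻¹ := by
            rw [mul_smul]
            simp [smul_mul', mul_assoc]
    obtain ⟨z, hz⟩ := horbit c hcoc ⟨g, fun l => by
      rw [hc l, hx]; group⟩
    refine ⟨g * (inc z)⁻¹, fun l => ?_, by rw [map_mul, map_inv, hpinc, inv_one, mul_one, hg]⟩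
    have h1 : inc (c l) = (inc z)⁻¹ * l • inc z := by
      rw [hz l, map_mul, map_inv, hinc_equiv]
    have h2 := hgx l
    rw [h1] at h2
    -- h2 : g * ((inc z)⁻¹ * l • inc z) = φz l * l • g * (φz l)⁻¹
    rw [← hinc_equiv] at h2
    have hw : l • (inc z)⁻¹ = (inc (l • z))⁻¹ := by rw [smul_inv', ← hinc_equiv]
    have h2' : φz l * l • g = g * (inc z)⁻¹ * inc (l • z) * φz l := by
      calc φz l * l • g = φz l * l • g * (φz l)⁻¹ * φz l := by group
        _ = g * ((inc z)⁻¹ * inc (l • z)) * φz l := by rw [← h2]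
        _ = g * (inc z)⁻¹ * inc (l • z) * φz l := by group
    calc (g * (inc z)⁻¹)⁻¹ * (φz l * l • (g * (inc z)⁻¹))
        = (g * (inc z)⁻¹)⁻¹ * (φz l * (l • g * (inc (l • z))⁻¹)) := by
          rw [smul_mul', hw]
      _ = inc z * g⁻¹ * (φz l * l • g) * (inc (l • z))⁻¹ := by group
      _ = inc z * g⁻¹ * (g * (inc z)⁻¹ * inc (l • z) * φz l) * (inc (l • z))⁻¹ := by rw [h2']
      _ = inc (l • z) * φz l * (inc (l • z))⁻¹ := by group
      _ = φz l := by rw [hcomm, mul_inv_cancel_right]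
end

section
/- Let W be a topological group with closed normal subgroup u and quotient Γ = W/u, and let Z ⊂ S be an inclusion of abelian Γ-groups (Z finite, S a Γ-module) with quotient S̄ = S/Z. Suppose H^1(Γ, S̄) = 1 and the map H^1(Γ, Z) → H^1(Γ, S) is bijective. Then the natural map H^1(W, Z) → H^1(u → W, Z → S) (the subset of H^1(W, S) of classes restricting on u into Z) is bijective. -/
/-- Let `W` be a group with a normal subgroup `u` and quotient
`Γ = W/u`, and let `Z ⊆ S` be an inclusion of abelian groups with `Γ`-action (the
`W`-action on `S` being trivial on `u`), `Z` finite and stable, with quotient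
`S̄ = S/Z`. If `H¹(Γ, S̄) = 1` and `H¹(Γ, Z) → H¹(Γ, S)` is bijective, then the natural
map `H¹(W, Z) → H¹(u → W, Z → S)` is bijective: every class of `H¹(W, S)` whose
restriction to `u` takes values in `Z` comes from a cocycle valued in `Z`, uniquely up
to coboundaries valued in `Z`. (Cocycles factoring through `Γ` are expressed as
`W`-cocycles vanishing on `u`.) -/
theorem h1_Z_to_relative_h1_bijective
    {W : Type} [Group W] (u : Subgroup W) (hu_normal : u.Normal)
    {S : Type} [AddCommGroup S] [DistribMulAction W S]
    (hu_triv : ∀ v ∈ u, ∀ s : S, v • s = s)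
    (Z : AddSubgroup S) [Finite ↥Z]
    (hZ_stable : ∀ w : W, ∀ z ∈ Z, w • z ∈ Z)
    -- `H¹(Γ, S̄) = 1`
    (hSbar : ∀ c : W → S,
      (∀ x y : W, c (x * y) - c x - x • c y ∈ Z) →
      (∀ v ∈ u, c v ∈ Z) →
      ∃ s : S, ∀ x : W, c x - (x • s - s) ∈ Z)
    -- injectivity of `H¹(Γ, Z) → H¹(Γ, S)`
    (hinjΓ : ∀ c c' : W → S,
      (∀ x y : W, c (x * y) = c x + x • c y) →
      (∀ x y : W, c' (x * y) = c' x + x • c' y) →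
      (∀ x : W, c x ∈ Z) → (∀ x : W, c' x ∈ Z) →
      (∀ v ∈ u, c v = 0) → (∀ v ∈ u, c' v = 0) →
      (∃ s : S, ∀ x : W, c' x = c x + (x • s - s)) →
      ∃ z ∈ Z, ∀ x : W, c' x = c x + (x • z - z))
    -- surjectivity of `H¹(Γ, Z) → H¹(Γ, S)`
    (hsurjΓ : ∀ c : W → S,
      (∀ x y : W, c (x * y) = c x + x • c y) → (∀ v ∈ u, c v = 0) →
      ∃ c' : W → S, (∀ x y : W, c' (x * y) = c' x + x • c' y) ∧
        (∀ x : W, c' x ∈ Z) ∧ (∀ v ∈ u, c' v = 0) ∧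
        ∃ s : S, ∀ x : W, c x = c' x + (x • s - s)) :
    -- injectivity of `H¹(W, Z) → H¹(W, S)`, hence of `H¹(W, Z) → H¹(u → W, Z → S)`
    (∀ c c' : W → S,
      (∀ x y : W, c (x * y) = c x + x • c y) →
      (∀ x y : W, c' (x * y) = c' x + x • c' y) →
      (∀ x : W, c x ∈ Z) → (∀ x : W, c' x ∈ Z) →
      (∃ s : S, ∀ x : W, c' x = c x + (x • s - s)) →
      ∃ z ∈ Z, ∀ x : W, c' x = c x + (x • z - z)) ∧
    -- surjectivity of `H¹(W, Z) → H¹(u → W, Z → S)`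
    (∀ c : W → S, (∀ x y : W, c (x * y) = c x + x • c y) →
      (∀ v ∈ u, c v ∈ Z) →
      ∃ c' : W → S, (∀ x y : W, c' (x * y) = c' x + x • c' y) ∧
        (∀ x : W, c' x ∈ Z) ∧
        ∃ s : S, ∀ x : W, c x = c' x + (x • s - s)) := by
  constructor
  · -- injectivity
    rintro c c' hc hc' hcZ hc'Z ⟨s, hs⟩
    set e : W → S := fun x => c' x - c x with he
    have hecoc : ∀ x y : W, e (x * y) = e x + x • e y := by
      intro x y
      simp only [he, hc x y, hc' x y, smul_sub]
      abel
    have heZ : ∀ x : W, e x ∈ Z := fun x => Z.sub_mem (hc'Z x) (hcZ x)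
    have heu : ∀ v ∈ u, e v = 0 := by
      intro v hv
      simp [he, hs v, hu_triv v hv s]
    obtain ⟨z, hzZ, hz⟩ := hinjΓ (fun _ => 0) e (by simp) hecoc
      (fun _ => Z.zero_mem) heZ (fun _ _ => rfl) heu
      ⟨s, fun x => by simp [he, hs x]⟩
    refine ⟨z, hzZ, fun x => ?_⟩
    have := hz x
    simp only [he, zero_add] at this
    linear_combination (norm := abel) this
  · -- surjectivity
    intro c hc hcu
    obtain ⟨s, hs⟩ := hSbar c (fun x y => by simp [hc x y, Z.zero_mem]) hcu
    refine ⟨fun x => c x - (x • s - s), fun x y => ?_, hs, s, fun x => (sub_add_cancel _ _).symm⟩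
    simp only [hc x y, smul_sub, mul_smul]
    abel
end
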